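/- Let p be a prime with p ≡ 3 (mod 4) and let G be a group of order 4p with a normal subgroup P of order p such that the quotient G/P is cyclic of order 4. Then G contains an element of order 2p. -/

import Mathlib

/-! The centralizer `C` of `P` is the kernel of the conjugation action `G → Aut P`. Since `P` is
abelian, `P ≤ C`, so `[G : C]` divides `[G : P] = 4`; it also divides `|Aut P| = p - 1`, hence
divides 2 because `p ≡ 3 (mod 4)`. So `C` has even order, and an involution of `C` times an
element of order `p` of `P` has order `2p`. -/

theorem MulAut.ker_conjNormal {G : Type*} [Group G] (N : Subgroup G) [N.Normal] :
    (MulAut.conjNormal : G →* MulAut N).ker = Subgroup.centralizer (N : Set G) := by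
  ext g
  simp only [MonoidHom.mem_ker, MulEquiv.ext_iff, MulAut.one_apply, Subtype.ext_iff,
    MulAut.conjNormal_apply, Subgroup.mem_centralizer_iff, SetLike.mem_coe, Subtype.forall]
  exact forall₂_congr fun _ _ => mul_inv_eq_iff_eq_mul.trans eq_comm

theorem Subgroup.index_centralizer_dvd_card_mulAut {G : Type*} [Group G] (N : Subgroup G)
    [N.Normal] : (centralizer (N : Set G)).index ∣ Nat.card (MulAut N) := by
  rw [← MulAut.ker_conjNormal, index_ker]
  exact card_subgroup_dvd_card _

theorem exists_orderOf_eq_mul_of_dvd_card_centralizer {G : Type*} [Group G] [Finite G]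
    {H : Subgroup G} {p q : ℕ} [Fact p.Prime] [Fact q.Prime] (hpq : p ≠ q)
    (hp : p ∣ Nat.card H) (hq : q ∣ Nat.card (Subgroup.centralizer (H : Set G))) :
    ∃ g : G, orderOf g = p * q := by
  obtain ⟨x, hx⟩ := exists_prime_orderOf_dvd_card' p hp
  obtain ⟨y, hy⟩ := exists_prime_orderOf_dvd_card' q hq
  rw [← Subgroup.orderOf_coe] at hx hy
  have hxy : Commute (x : G) y := Subgroup.mem_centralizer_iff.mp y.2 x x.2
  have hcop : (orderOf (x : G)).Coprime (orderOf (y : G)) := by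
    rw [hx, hy]
    exact (Nat.coprime_primes Fact.out Fact.out).mpr hpq
  exact ⟨x * y, by rw [hxy.orderOf_mul_eq_mul_orderOf_of_coprime hcop, hx, hy]⟩

theorem Nat.dvd_two_of_dvd_four_of_dvd_sub_one {n p : ℕ} (hp : p % 4 = 3) (h4 : n ∣ 4)
    (hp1 : n ∣ p - 1) : n ∣ 2 := by
  have : n ≤ 4 := Nat.le_of_dvd (by norm_num) h4
  interval_cases n <;> omega

theorem exists_order_two_mul_p_of_cyclic_quotient
    (p : ℕ) (hp : p.Prime) (hmod : p % 4 = 3)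
    (G : Type*) [Group G] (hcard : Nat.card G = 4 * p)
    (P : Subgroup G) [P.Normal] (hP : Nat.card P = p) :
    ∃ g : G, orderOf g = 2 * p := by
  have : Fact p.Prime := ⟨hp⟩
  have : Finite G := Nat.finite_of_card_ne_zero (by simp [hcard, hp.ne_zero])
  have : IsCyclic P := isCyclic_of_prime_card hP
  set C := Subgroup.centralizer (P : Set G)
  have hPindex : P.index = 4 := by
    have := P.card_mul_index
    rw [hcard, hP, mul_comm] at this
    exact Nat.eq_of_mul_eq_mul_right hp.pos this
  have hCindex : C.index ∣ 2 := by
    refine Nat.dvd_two_of_dvd_four_of_dvd_sub_one hmod ?_ ?_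
    · exact hPindex ▸ Subgroup.index_dvd_of_le (Subgroup.le_centralizer P)
    · simpa [IsCyclic.card_mulAut, hP, Nat.totient_prime hp] using
        P.index_centralizer_dvd_card_mulAut
  have h2C : 2 ∣ Nat.card C := by
    have := C.card_mul_index
    have : C.index ≤ 2 := Nat.le_of_dvd two_pos hCindex
    interval_cases C.index <;> omega
  obtain ⟨g, hg⟩ := exists_orderOf_eq_mul_of_dvd_card_centralizer (p := p) (by omega) hP.symm.dvd h2C
  exact ⟨g, by rw [hg, mul_comm]⟩
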